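/- Let n1, n2 be integers with n1 ≥ 2 and n2 ≥ 2, and let m3, m4 be integers with m3 ≥ 2 and m4 ≥ 2. Then for every quintuple of integers (x1,...,x5), not all zero, one has 3*x1^2 + 2*n1*x2^2 + 2*n2*x3^2 + 2*m3^2*x4^2 + (2*m4^2+1)*x5^2 + 2*m3*m4*x4*x5 + 2*x1*x5 ≥ 3. Equivalently, this quantity equals 2*x1^2 + 2*n1*x2^2 + 2*n2*x3^2 + m3^2*x4^2 + m4^2*x5^2 + (m3*x4 + m4*x5)^2 + (x1+x5)^2 and is at least 3 whenever (x1,...,x5) ≠ 0. -/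

import Mathlib

/-!
After completing squares the form is a sum of nonnegative terms. If one of `x₂, …, x₅` is
nonzero, the matching diagonal term `2n₁x₂²`, `2n₂x₃²`, `m₃²x₄²` or `m₄²x₅²` alone is at least
`4`; otherwise only `x₁` is nonzero and the form is `3x₁²`.
-/

lemma Int.le_mul_sq_of_ne_zero {c x : ℤ} (hc : 0 ≤ c) (hx : x ≠ 0) : c ≤ c * x ^ 2 :=
  le_mul_of_one_le_right hc ((one_le_sq_iff_one_le_abs x).mpr (Int.one_le_abs hx))

/-- Case 2 of the case n = 4 of Theorem 3.7: the norm form of the rank-5 lattice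
with Gram matrix `[[3,0,0,0,1],[0,2n₁,0,0,0],[0,0,2n₂,0,0],[0,0,0,2m₃²,m₃m₄],
[1,0,0,m₃m₄,2m₄²+1]]` equals
`2x₁² + 2n₁x₂² + 2n₂x₃² + m₃²x₄² + m₄²x₅² + (m₃x₄+m₄x₅)² + (x₁+x₅)²`
and takes values ≥ 3 on nonzero integer vectors. -/
theorem stmt_5 (n1 n2 m3 m4 : ℤ) (hn1 : 2 ≤ n1) (hn2 : 2 ≤ n2)
    (hm3 : 2 ≤ m3) (hm4 : 2 ≤ m4)
    (x1 x2 x3 x4 x5 : ℤ) (hx : ¬(x1 = 0 ∧ x2 = 0 ∧ x3 = 0 ∧ x4 = 0 ∧ x5 = 0)) :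
    3 * x1 ^ 2 + 2 * n1 * x2 ^ 2 + 2 * n2 * x3 ^ 2 + 2 * m3 ^ 2 * x4 ^ 2
        + (2 * m4 ^ 2 + 1) * x5 ^ 2 + 2 * m3 * m4 * x4 * x5 + 2 * x1 * x5
      = 2 * x1 ^ 2 + 2 * n1 * x2 ^ 2 + 2 * n2 * x3 ^ 2 + m3 ^ 2 * x4 ^ 2 + m4 ^ 2 * x5 ^ 2
        + (m3 * x4 + m4 * x5) ^ 2 + (x1 + x5) ^ 2 ∧
    3 ≤ 3 * x1 ^ 2 + 2 * n1 * x2 ^ 2 + 2 * n2 * x3 ^ 2 + 2 * m3 ^ 2 * x4 ^ 2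
        + (2 * m4 ^ 2 + 1) * x5 ^ 2 + 2 * m3 * m4 * x4 * x5 + 2 * x1 * x5 := by
  have hsquares : 3 * x1 ^ 2 + 2 * n1 * x2 ^ 2 + 2 * n2 * x3 ^ 2 + 2 * m3 ^ 2 * x4 ^ 2
        + (2 * m4 ^ 2 + 1) * x5 ^ 2 + 2 * m3 * m4 * x4 * x5 + 2 * x1 * x5
      = 2 * x1 ^ 2 + 2 * n1 * x2 ^ 2 + 2 * n2 * x3 ^ 2 + m3 ^ 2 * x4 ^ 2 + m4 ^ 2 * x5 ^ 2
        + (m3 * x4 + m4 * x5) ^ 2 + (x1 + x5) ^ 2 := by ring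
  refine ⟨hsquares, hsquares ▸ ?_⟩
  have h2 : 0 ≤ 2 * n1 * x2 ^ 2 := mul_nonneg (by linarith) (sq_nonneg x2)
  have h3 : 0 ≤ 2 * n2 * x3 ^ 2 := mul_nonneg (by linarith) (sq_nonneg x3)
  have h4 : 4 ≤ m3 ^ 2 := by nlinarith
  have h5 : 4 ≤ m4 ^ 2 := by nlinarith
  have hrest : 0 ≤ 2 * x1 ^ 2 + m3 ^ 2 * x4 ^ 2 + m4 ^ 2 * x5 ^ 2
      + (m3 * x4 + m4 * x5) ^ 2 + (x1 + x5) ^ 2 := by positivity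
  by_cases hx2 : x2 = 0
  swap
  · linarith [Int.le_mul_sq_of_ne_zero (by linarith : 0 ≤ 2 * n1) hx2]
  by_cases hx3 : x3 = 0
  swap
  · linarith [Int.le_mul_sq_of_ne_zero (by linarith : 0 ≤ 2 * n2) hx3]
  by_cases hx4 : x4 = 0
  swap
  · nlinarith [Int.le_mul_sq_of_ne_zero (sq_nonneg m3) hx4]
  by_cases hx5 : x5 = 0
  swap
  · nlinarith [Int.le_mul_sq_of_ne_zero (sq_nonneg m4) hx5]
  have hx1 : x1 ≠ 0 := fun hx1 => hx ⟨hx1, hx2, hx3, hx4, hx5⟩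
  subst hx2 hx3 hx4 hx5
  linarith [Int.le_mul_sq_of_ne_zero (by norm_num : (0 : ℤ) ≤ 3) hx1]
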